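/- Let 𝓛 : ℝ^d → ℝ be L-smooth and bounded below by 𝓛⋆. On a probability space with filtration (𝓕_t), let θ^(0) be deterministic and define θ^(t+1) = θ^(t) − η (I + λ I_G^(t)) g_t, where λ ≥ 0, g_t is 𝓕_{t+1}-measurable with E[g_t | 𝓕_t] = ∇𝓛(θ^(t)) and E[‖g_t − ∇𝓛(θ^(t))‖² | 𝓕_t] ≤ σ², and I_G^(t) is an 𝓕_t-measurable symmetric positive semidefinite d×d matrix with ‖I_G^(t)‖_op ≤ G. For T ≥ (1+λG)², with step size η = 1/((1+λG)·L·√T) (which satisfies η ≤ 1/(L(1+λG)²)), one has min_{0 ≤ t < T} E[‖∇𝓛(θ^(t))‖²] ≤ ( 2(1+λG)·L·(𝓛(θ^(0)) − 𝓛⋆) + (1+λG)·σ² ) / √T; in particular min_{0 ≤ t < T} E[‖∇𝓛(θ^(t))‖²] = O(1/√T). -/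

import Mathlib

/-!
The FIRE step is preconditioned SGD, `θ ↦ θ - η A g`, with the symmetric preconditioner
`A = 1 + λ I_G` satisfying `1 ≤ A` and `‖A‖ ≤ K := 1 + λG`. The descent lemma for the
`L`-smooth `𝓛` bounds `𝓛` after one step by `𝓛(θ) - η ⟪A ∇𝓛(θ), g⟫ + (L η² / 2) ‖A g‖²`.
Conditioning on `𝓕_t`, where `θ` and `A` are known, turns the cross term into
`⟪A ∇𝓛(θ), ∇𝓛(θ)⟫ ≥ ‖∇𝓛(θ)‖²` and bounds the second moment by `K² (‖∇𝓛(θ)‖² + σ²)`.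
As `η L K² ≤ 1`, each step decreases `E 𝓛(θ)` by at least `(η/2) E ‖∇𝓛(θ)‖²` up to the
noise term `L η² K² σ² / 2`; telescoping down to `𝓛⋆` and bounding the minimum by the average
gives the rate for the chosen `η`.
-/

open MeasureTheory Finset
open scoped RealInnerProductSpace

section Smooth

variable {E : Type*} [NormedAddCommGroup E] [InnerProductSpace ℝ E] [CompleteSpace E]
  {f : E → ℝ} {L : ℝ}

theorem hasDerivAt_apply_add_smul (hf : Differentiable ℝ f) (a h : E) (s : ℝ) :
    HasDerivAt (fun s : ℝ => f (a + s • h)) ⟪gradient f (a + s • h), h⟫ s := by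
  have hline : HasDerivAt (fun s : ℝ => a + s • h) h s := by
    simpa using ((hasDerivAt_id s).smul_const h).const_add a
  simpa [Function.comp_def] using
    (hf (a + s • h)).hasGradientAt.hasFDerivAt.comp_hasDerivAt s hline

theorem descent_lemma (hf : Differentiable ℝ f)
    (hsmooth : ∀ a b, ‖gradient f a - gradient f b‖ ≤ L * ‖a - b‖) (a b : E) :
    f b ≤ f a + ⟪gradient f a, b - a⟫ + L / 2 * ‖b - a‖ ^ 2 := by
  set h := b - a
  set φ : ℝ → ℝ := fun s => f (a + s • h) - s * ⟪gradient f a, h⟫ - L / 2 * s ^ 2 * ‖h‖ ^ 2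
  have hφ : ∀ s, HasDerivAt φ
      (⟪gradient f (a + s • h) - gradient f a, h⟫ - L * s * ‖h‖ ^ 2) s := fun s => by
    refine (((hasDerivAt_apply_add_smul hf a h s).fun_sub
      ((hasDerivAt_id s).mul_const ⟪gradient f a, h⟫)).fun_sub
      (((hasDerivAt_pow 2 s).const_mul (L / 2)).mul_const (‖h‖ ^ 2))).congr_deriv ?_
    rw [inner_sub_left]
    ring
  have hφ' : ∀ s ∈ interior (Set.Icc (0 : ℝ) 1), deriv φ s ≤ 0 := by
    intro s hs
    rw [interior_Icc] at hs
    rw [(hφ s).deriv, sub_nonpos]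
    calc ⟪gradient f (a + s • h) - gradient f a, h⟫
        ≤ ‖gradient f (a + s • h) - gradient f a‖ * ‖h‖ := real_inner_le_norm _ _
      _ ≤ L * ‖s • h‖ * ‖h‖ := by
        gcongr
        simpa using hsmooth (a + s • h) a
      _ = L * s * ‖h‖ ^ 2 := by rw [norm_smul, Real.norm_of_nonneg hs.1.le]; ring
  have hφ01 := antitoneOn_of_deriv_nonpos (convex_Icc 0 1)
    (fun s _ => (hφ s).continuousAt.continuousWithinAt)
    (fun s _ => (hφ s).differentiableAt.differentiableWithinAt) hφ'
    (Set.left_mem_Icc.2 zero_le_one) (Set.right_mem_Icc.2 zero_le_one) zero_le_one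
  simp only [φ, one_smul, zero_smul, add_zero, h, add_sub_cancel] at hφ01
  linarith

theorem lipschitzWith_gradient
    (hsmooth : ∀ a b, ‖gradient f a - gradient f b‖ ≤ L * ‖a - b‖) :
    LipschitzWith (Real.toNNReal L) (gradient f) :=
  LipschitzWith.of_dist_le_mul fun a b => by
    simpa [dist_eq_norm] using (hsmooth a b).trans
      (mul_le_mul_of_nonneg_right (Real.le_coe_toNNReal L) (norm_nonneg _))

theorem preconditioned_step_le (hf : Differentiable ℝ f)
    (hsmooth : ∀ a b, ‖gradient f a - gradient f b‖ ≤ L * ‖a - b‖)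
    {A : E →L[ℝ] E} (hA : ∀ v w, ⟪A v, w⟫ = ⟪v, A w⟫) (η : ℝ) (x y : E) :
    f (x - η • A y) ≤ f x - η * ⟪A (gradient f x), y⟫ + L / 2 * (η ^ 2 * ‖A y‖ ^ 2) := by
  have := descent_lemma hf hsmooth x (x - η • A y)
  rwa [sub_sub_cancel_left, inner_neg_right, real_inner_smul_right, ← hA, norm_neg, norm_smul,
    mul_pow, Real.norm_eq_abs, sq_abs, ← sub_eq_add_neg] at this

end Smooth

section Lp

variable {Ω E F : Type*} {m0 : MeasurableSpace Ω} {μ : Measure Ω}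
  [NormedAddCommGroup E] [NormedSpace ℝ E] [NormedAddCommGroup F] [NormedSpace ℝ F]

theorem MeasureTheory.MemLp.clm_apply_of_norm_le {p : ENNReal} {A : Ω → E →L[ℝ] F} {v : Ω → E}
    {K : ℝ} (hA : AEStronglyMeasurable A μ) (hA_norm : ∀ ω, ‖A ω‖ ≤ K) (hv : MemLp v p μ) :
    MemLp (fun ω => A ω (v ω)) p μ :=
  hv.of_le_mul ((ContinuousLinearMap.apply ℝ F).aestronglyMeasurable_comp₂ hv.1 hA)
    (ae_of_all _ fun ω => (A ω).le_of_opNorm_le (hA_norm ω) (v ω))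

theorem integral_norm_sq_clm_apply_le {A : Ω → E →L[ℝ] F} {v : Ω → E} {K : ℝ}
    (hA : AEStronglyMeasurable A μ) (hA_norm : ∀ ω, ‖A ω‖ ≤ K) (hv : MemLp v 2 μ) :
    ∫ ω, ‖A ω (v ω)‖ ^ 2 ∂μ ≤ K ^ 2 * ∫ ω, ‖v ω‖ ^ 2 ∂μ := by
  rw [← integral_const_mul]
  refine integral_mono ((hv.clm_apply_of_norm_le hA hA_norm).integrable_norm_pow two_ne_zero)
    ((hv.integrable_norm_pow two_ne_zero).const_mul _) fun ω => ?_
  rw [← mul_pow]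
  exact pow_le_pow_left₀ (norm_nonneg _) ((A ω).le_of_opNorm_le (hA_norm ω) (v ω)) 2

theorem MeasureTheory.MemLp.comp_lipschitzWith [IsFiniteMeasure μ] {X Y : Type*}
    [NormedAddCommGroup X] [NormedAddCommGroup Y] {p : ENNReal} {Φ : X → Y} {C : NNReal}
    (hΦ : LipschitzWith C Φ) {x : Ω → X} (hx : MemLp x p μ) :
    MemLp (fun ω => Φ (x ω)) p μ := by
  refine ((memLp_const ‖Φ 0‖).add (hx.norm.const_mul C)).of_le
    (hΦ.continuous.comp_aestronglyMeasurable hx.1) (ae_of_all _ fun ω => ?_)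
  have hΦx := hΦ.norm_sub_le (x ω) 0
  rw [sub_zero] at hΦx
  rw [Pi.add_apply, Real.norm_of_nonneg (by positivity)]
  linarith [norm_le_insert' (Φ (x ω)) (Φ 0)]

theorem stronglyAdapted_of_update {ℱ : Filtration ℕ m0} {θ g : ℕ → Ω → E}
    {A : ℕ → Ω → E →L[ℝ] E} {η : ℝ} (hθ0 : StronglyMeasurable[ℱ 0] (θ 0))
    (hA : StronglyAdapted ℱ A) (hg : ∀ t, StronglyMeasurable[ℱ (t + 1)] (g t))
    (hupdate : ∀ t ω, θ (t + 1) ω = θ t ω - η • A t ω (g t ω)) : StronglyAdapted ℱ θ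
  | 0 => hθ0
  | t + 1 => by
    have hle := ℱ.mono (Nat.le_succ t)
    rw [funext (hupdate t)]
    exact ((stronglyAdapted_of_update hθ0 hA hg hupdate t).mono hle).sub
      (((ContinuousLinearMap.apply ℝ E).continuous₂.comp_stronglyMeasurable
        ((hg t).prodMk ((hA t).mono hle))).const_smul η)

theorem memLp_of_update [IsFiniteMeasure μ] {p : ENNReal} {θ g : ℕ → Ω → E}
    {A : ℕ → Ω → E →L[ℝ] E} {η K : ℝ} {Φ : E → E} {C : NNReal} (hΦ : LipschitzWith C Φ)
    (hθ0 : MemLp (θ 0) p μ) (hA : ∀ t, AEStronglyMeasurable (A t) μ)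
    (hA_norm : ∀ t ω, ‖A t ω‖ ≤ K) (hnoise : ∀ t, MemLp (fun ω => g t ω - Φ (θ t ω)) p μ)
    (hupdate : ∀ t ω, θ (t + 1) ω = θ t ω - η • A t ω (g t ω)) :
    ∀ t, MemLp (θ t) p μ ∧ MemLp (g t) p μ := by
  have hg : ∀ t, MemLp (θ t) p μ → MemLp (g t) p μ := fun t hθ =>
    ((hnoise t).add (hθ.comp_lipschitzWith hΦ)).ae_eq (ae_of_all _ fun ω => sub_add_cancel _ _)
  intro t
  induction t with
  | zero => exact ⟨hθ0, hg 0 hθ0⟩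
  | succ t ih =>
    have hθ : MemLp (θ (t + 1)) p μ := by
      rw [funext (hupdate t)]
      exact ih.1.sub ((ih.2.clm_apply_of_norm_le (hA t) (hA_norm t)).const_smul η)
    exact ⟨hθ, hg _ hθ⟩

end Lp

section CondExp

variable {Ω E : Type*} {m m0 : MeasurableSpace Ω} {μ : Measure Ω}
  [NormedAddCommGroup E] [InnerProductSpace ℝ E]

theorem integral_le_of_condExp_le (hm : m ≤ m0) [IsProbabilityMeasure μ] {X : Ω → ℝ} {c : ℝ}
    (hX : μ[X | m] ≤ᵐ[μ] fun _ => c) : ∫ ω, X ω ∂μ ≤ c := by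
  rw [← integral_condExp hm]
  simpa using integral_mono_ae integrable_condExp (integrable_const c) hX

theorem MeasureTheory.MemLp.integrable_inner {u v : Ω → E} (hu : MemLp u 2 μ)
    (hv : MemLp v 2 μ) : Integrable (fun ω => ⟪u ω, v ω⟫) μ := by
  refine (L2.integrable_inner (𝕜 := ℝ) (hu.toLp u) (hv.toLp v)).congr ?_
  filter_upwards [hu.coeFn_toLp, hv.coeFn_toLp] with ω hu' hv'
  rw [hu', hv']

variable [CompleteSpace E]

theorem integral_inner_condExp (hm : m ≤ m0) [SigmaFinite (μ.trim hm)] {u v : Ω → E}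
    (hu : StronglyMeasurable[m] u) (huv : Integrable (fun ω => ⟪u ω, v ω⟫) μ)
    (hv : Integrable v μ) :
    ∫ ω, ⟪u ω, v ω⟫ ∂μ = ∫ ω, ⟪u ω, (μ[v | m]) ω⟫ ∂μ := by
  rw [← integral_condExp hm]
  exact integral_congr_ae (condExp_bilin_of_stronglyMeasurable_left (innerSL ℝ) hu huv hv)

theorem integral_inner_eq_of_condExp_eq (hm : m ≤ m0) [IsFiniteMeasure μ] {u v w : Ω → E}
    (hu : StronglyMeasurable[m] u) (hu2 : MemLp u 2 μ) (hv2 : MemLp v 2 μ)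
    (hcond : μ[v | m] =ᵐ[μ] w) : ∫ ω, ⟪u ω, v ω⟫ ∂μ = ∫ ω, ⟪u ω, w ω⟫ ∂μ := by
  rw [integral_inner_condExp hm hu (hu2.integrable_inner hv2) (hv2.integrable one_le_two)]
  exact integral_congr_ae (hcond.mono fun ω hω => by simp only [hω])

theorem integral_norm_sq_eq_add_integral_norm_sub_sq (hm : m ≤ m0) [IsFiniteMeasure μ]
    {v w : Ω → E} (hw : StronglyMeasurable[m] w) (hv2 : MemLp v 2 μ) (hw2 : MemLp w 2 μ)
    (hcond : μ[v | m] =ᵐ[μ] w) :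
    ∫ ω, ‖v ω‖ ^ 2 ∂μ = ∫ ω, ‖w ω‖ ^ 2 ∂μ + ∫ ω, ‖v ω - w ω‖ ^ 2 ∂μ := by
  have hvw : MemLp (fun ω => v ω - w ω) 2 μ := hv2.sub hw2
  have hcross : ∫ ω, ⟪w ω, v ω - w ω⟫ ∂μ = 0 := by
    simp_rw [inner_sub_right]
    rw [integral_sub (hw2.integrable_inner hv2) (hw2.integrable_inner hw2),
      integral_inner_eq_of_condExp_eq hm hw hw2 hv2 hcond, sub_self]
  have hexpand : ∀ ω, ‖v ω‖ ^ 2 = ‖w ω‖ ^ 2 + 2 * ⟪w ω, v ω - w ω⟫ + ‖v ω - w ω‖ ^ 2 := by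
    intro ω
    simpa using norm_add_sq_real (w ω) (v ω - w ω)
  simp_rw [hexpand]
  have hw_sq := hw2.integrable_norm_pow two_ne_zero
  have hcross_int := (hw2.integrable_inner hvw).const_mul 2
  rw [integral_add (hw_sq.fun_add hcross_int) (hvw.integrable_norm_pow two_ne_zero),
    integral_add hw_sq hcross_int, integral_const_mul, hcross]
  ring

theorem integral_le_integral_inner_of_condExp_eq (hm : m ≤ m0) [IsFiniteMeasure μ]
    {A : Ω → E →L[ℝ] E} {K : ℝ} (hA : StronglyMeasurable[m] A)
    (hA_ge : ∀ ω v, ‖v‖ ^ 2 ≤ ⟪A ω v, v⟫) (hA_norm : ∀ ω, ‖A ω‖ ≤ K) {v w : Ω → E}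
    (hw : StronglyMeasurable[m] w) (hv2 : MemLp v 2 μ) (hw2 : MemLp w 2 μ)
    (hcond : μ[v | m] =ᵐ[μ] w) :
    ∫ ω, ‖w ω‖ ^ 2 ∂μ ≤ ∫ ω, ⟪A ω (w ω), v ω⟫ ∂μ := by
  have hAw : StronglyMeasurable[m] fun ω => A ω (w ω) :=
    (ContinuousLinearMap.apply ℝ E).continuous₂.comp_stronglyMeasurable (hw.prodMk hA)
  have hAw2 : MemLp (fun ω => A ω (w ω)) 2 μ :=
    hw2.clm_apply_of_norm_le (hA.mono hm).aestronglyMeasurable hA_norm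
  rw [integral_inner_eq_of_condExp_eq hm hAw hAw2 hv2 hcond]
  exact integral_mono (hw2.integrable_norm_pow two_ne_zero)
    (hAw2.integrable_inner hw2) fun ω => hA_ge ω (w ω)

end CondExp

theorem sum_range_le_of_le_sub_add {a b : ℕ → ℝ} {c : ℝ} (h : ∀ t, a (t + 1) ≤ a t - b t + c)
    (T : ℕ) : ∑ t ∈ range T, b t ≤ a 0 - a T + T * c := by
  calc ∑ t ∈ range T, b t ≤ ∑ t ∈ range T, (a t - a (t + 1) + c) :=
        sum_le_sum fun t _ => by linarith [h t]
    _ = a 0 - a T + T * c := by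
      rw [sum_add_distrib, sum_range_sub', sum_const, card_range, nsmul_eq_mul]

theorem inf'_le_sum_div_card {ι : Type*} {s : Finset ι} (hs : s.Nonempty) (b : ι → ℝ) :
    s.inf' hs b ≤ (∑ i ∈ s, b i) / #s := by
  rw [le_div_iff₀ (by exact_mod_cast hs.card_pos), mul_comm, ← nsmul_eq_mul]
  exact card_nsmul_le_sum s b _ fun i hi => inf'_le b hi

section PreconditionedSGD

variable {Ω E : Type*} {m m0 : MeasurableSpace Ω} {μ : Measure Ω}
  [NormedAddCommGroup E] [InnerProductSpace ℝ E] [CompleteSpace E] {f : E → ℝ} {L : ℝ}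

theorem integrable_comp_of_smooth_of_bddBelow [IsFiniteMeasure μ] (hf : Differentiable ℝ f)
    (hsmooth : ∀ a b, ‖gradient f a - gradient f b‖ ≤ L * ‖a - b‖) {Lstar : ℝ}
    (hbdd : ∀ p, Lstar ≤ f p) {x : Ω → E} (hx : MemLp x 2 μ) :
    Integrable (fun ω => f (x ω)) μ := by
  refine Integrable.mono' (((integrable_const (|Lstar| + |f 0|)).add
      ((hx.integrable one_le_two).norm.const_mul ‖gradient f 0‖)).add
      ((hx.integrable_norm_pow two_ne_zero).const_mul (|L| / 2)))
    (hf.continuous.comp_aestronglyMeasurable hx.1) (ae_of_all _ fun ω => ?_)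
  have hup := descent_lemma hf hsmooth 0 (x ω)
  have hcs := real_inner_le_norm (gradient f 0) (x ω)
  have hL : L / 2 * ‖x ω‖ ^ 2 ≤ |L| / 2 * ‖x ω‖ ^ 2 := by gcongr; exact le_abs_self L
  simp only [sub_zero, Pi.add_apply, Real.norm_eq_abs, abs_le] at hup ⊢
  have hnonneg : 0 ≤ ‖gradient f 0‖ * ‖x ω‖ + |L| / 2 * ‖x ω‖ ^ 2 := by positivity
  constructor <;> linarith [hbdd (x ω), abs_nonneg Lstar, neg_abs_le Lstar, le_abs_self (f 0),
    abs_nonneg (f 0)]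

theorem integral_preconditioned_step_le [IsProbabilityMeasure μ] (hm : m ≤ m0)
    (hf : Differentiable ℝ f) (hL : 0 ≤ L)
    (hsmooth : ∀ a b, ‖gradient f a - gradient f b‖ ≤ L * ‖a - b‖)
    {x g : Ω → E} {A : Ω → E →L[ℝ] E} {η K σ : ℝ}
    (hx : StronglyMeasurable[m] x) (hA : StronglyMeasurable[m] A)
    (hA_symm : ∀ ω v w, ⟪A ω v, w⟫ = ⟪v, A ω w⟫) (hA_ge : ∀ ω v, ‖v‖ ^ 2 ≤ ⟪A ω v, v⟫)
    (hA_norm : ∀ ω, ‖A ω‖ ≤ K) (hx2 : MemLp x 2 μ) (hg2 : MemLp g 2 μ)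
    (hmean : μ[g | m] =ᵐ[μ] fun ω => gradient f (x ω))
    (hvar : ∫ ω, ‖g ω - gradient f (x ω)‖ ^ 2 ∂μ ≤ σ ^ 2)
    (hfx : Integrable (fun ω => f (x ω)) μ)
    (hfx' : Integrable (fun ω => f (x ω - η • A ω (g ω))) μ)
    (hη : 0 ≤ η) (hηLK : η * L * K ^ 2 ≤ 1) :
    ∫ ω, f (x ω - η • A ω (g ω)) ∂μ ≤ ∫ ω, f (x ω) ∂μ
      - η / 2 * ∫ ω, ‖gradient f (x ω)‖ ^ 2 ∂μ + L * η ^ 2 * K ^ 2 * σ ^ 2 / 2 := by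
  set v := fun ω => gradient f (x ω)
  have hv : StronglyMeasurable[m] v :=
    (lipschitzWith_gradient hsmooth).continuous.comp_stronglyMeasurable hx
  have hv2 : MemLp v 2 μ := hx2.comp_lipschitzWith (lipschitzWith_gradient hsmooth)
  have hAv2 : MemLp (fun ω => A ω (v ω)) 2 μ :=
    hv2.clm_apply_of_norm_le (hA.mono hm).aestronglyMeasurable hA_norm
  have hAg2 : MemLp (fun ω => A ω (g ω)) 2 μ :=
    hg2.clm_apply_of_norm_le (hA.mono hm).aestronglyMeasurable hA_norm
  have hfirst : ∫ ω, ‖v ω‖ ^ 2 ∂μ ≤ ∫ ω, ⟪A ω (v ω), g ω⟫ ∂μ :=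
    integral_le_integral_inner_of_condExp_eq hm hA hA_ge hA_norm hv hg2 hv2 hmean
  have hsecond : ∫ ω, ‖A ω (g ω)‖ ^ 2 ∂μ ≤ K ^ 2 * (∫ ω, ‖v ω‖ ^ 2 ∂μ + σ ^ 2) := by
    refine (integral_norm_sq_clm_apply_le (hA.mono hm).aestronglyMeasurable hA_norm hg2).trans ?_
    rw [integral_norm_sq_eq_add_integral_norm_sub_sq hm hv hg2 hv2 hmean]
    gcongr
  have hlin : Integrable (fun ω => f (x ω) - η * ⟪A ω (v ω), g ω⟫) μ :=
    hfx.sub ((hAv2.integrable_inner hg2).const_mul η)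
  have hquad : Integrable (fun ω => L / 2 * (η ^ 2 * ‖A ω (g ω)‖ ^ 2)) μ :=
    ((hAg2.integrable_norm_pow two_ne_zero).const_mul _).const_mul _
  have hpath : ∫ ω, f (x ω - η • A ω (g ω)) ∂μ ≤ ∫ ω, f (x ω) ∂μ
      - η * ∫ ω, ⟪A ω (v ω), g ω⟫ ∂μ + L / 2 * (η ^ 2 * ∫ ω, ‖A ω (g ω)‖ ^ 2 ∂μ) := by
    calc ∫ ω, f (x ω - η • A ω (g ω)) ∂μ
        ≤ ∫ ω, (f (x ω) - η * ⟪A ω (v ω), g ω⟫ + L / 2 * (η ^ 2 * ‖A ω (g ω)‖ ^ 2)) ∂μ :=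
          integral_mono hfx' (hlin.add hquad) fun ω =>
            preconditioned_step_le hf hsmooth (hA_symm ω) η (x ω) (g ω)
      _ = _ := by
        rw [integral_add hlin hquad, integral_sub hfx ((hAv2.integrable_inner hg2).const_mul η),
          integral_const_mul, integral_const_mul, integral_const_mul]
  have hG : 0 ≤ ∫ ω, ‖v ω‖ ^ 2 ∂μ := integral_nonneg fun ω => sq_nonneg _
  have hηL : L * η ^ 2 * K ^ 2 ≤ η := by nlinarith
  nlinarith [mul_le_mul_of_nonneg_left hsecond (by positivity : 0 ≤ L / 2 * η ^ 2),
    mul_le_mul_of_nonneg_left hfirst hη, mul_le_mul_of_nonneg_right hηL hG]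

theorem preconditioned_sgd_sum_integral_norm_sq_le [IsProbabilityMeasure μ]
    {ℱ : Filtration ℕ m0} (hf : Differentiable ℝ f) (hL : 0 ≤ L)
    (hsmooth : ∀ a b, ‖gradient f a - gradient f b‖ ≤ L * ‖a - b‖) {Lstar : ℝ}
    (hbdd : ∀ p, Lstar ≤ f p) {θ g : ℕ → Ω → E} {A : ℕ → Ω → E →L[ℝ] E} {θ0 : E} {η K σ : ℝ}
    (hθ0 : θ 0 = fun _ => θ0) (hupdate : ∀ t ω, θ (t + 1) ω = θ t ω - η • A t ω (g t ω))
    (hg_meas : ∀ t, StronglyMeasurable[ℱ (t + 1)] (g t))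
    (hmean : ∀ t, μ[g t | ℱ t] =ᵐ[μ] fun ω => gradient f (θ t ω))
    (hvar_int : ∀ t, Integrable (fun ω => ‖g t ω - gradient f (θ t ω)‖ ^ 2) μ)
    (hvar : ∀ t, μ[fun ω => ‖g t ω - gradient f (θ t ω)‖ ^ 2 | ℱ t] ≤ᵐ[μ] fun _ => σ ^ 2)
    (hA_meas : StronglyAdapted ℱ A) (hA_symm : ∀ t ω v w, ⟪A t ω v, w⟫ = ⟪v, A t ω w⟫)
    (hA_ge : ∀ t ω v, ‖v‖ ^ 2 ≤ ⟪A t ω v, v⟫) (hA_norm : ∀ t ω, ‖A t ω‖ ≤ K)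
    (hη : 0 ≤ η) (hηLK : η * L * K ^ 2 ≤ 1) (T : ℕ) :
    η / 2 * ∑ t ∈ range T, ∫ ω, ‖gradient f (θ t ω)‖ ^ 2 ∂μ
      ≤ f θ0 - Lstar + T * (L * η ^ 2 * K ^ 2 * σ ^ 2 / 2) := by
  have hθ : StronglyAdapted ℱ θ :=
    stronglyAdapted_of_update (by rw [hθ0]; exact stronglyMeasurable_const) hA_meas hg_meas hupdate
  have hgrad := lipschitzWith_gradient hsmooth
  have hnoise : ∀ t, MemLp (fun ω => g t ω - gradient f (θ t ω)) 2 μ := fun t =>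
    (memLp_two_iff_integrable_sq_norm (((hg_meas t).mono (ℱ.le _)).aestronglyMeasurable.sub
      (hgrad.continuous.comp_aestronglyMeasurable ((hθ t).mono (ℱ.le t)).aestronglyMeasurable))).2
      (hvar_int t)
  have hL2 := memLp_of_update hgrad (by rw [hθ0]; exact memLp_const θ0)
    (fun t => ((hA_meas t).mono (ℱ.le t)).aestronglyMeasurable) hA_norm hnoise hupdate
  have hint : ∀ t, Integrable (fun ω => f (θ t ω)) μ := fun t =>
    integrable_comp_of_smooth_of_bddBelow hf hsmooth hbdd (hL2 t).1
  have hstep : ∀ t, ∫ ω, f (θ (t + 1) ω) ∂μ ≤ ∫ ω, f (θ t ω) ∂μ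
      - η / 2 * ∫ ω, ‖gradient f (θ t ω)‖ ^ 2 ∂μ + L * η ^ 2 * K ^ 2 * σ ^ 2 / 2 := fun t => by
    have hnext := hint (t + 1)
    simp only [hupdate t] at hnext ⊢
    exact integral_preconditioned_step_le (ℱ.le t) hf hL hsmooth (hθ t) (hA_meas t) (hA_symm t)
      (hA_ge t) (hA_norm t) (hL2 t).1 (hL2 t).2 (hmean t)
      (integral_le_of_condExp_le (ℱ.le t) (hvar t)) (hint t) hnext hη hηLK
  have hlow : Lstar ≤ ∫ ω, f (θ T ω) ∂μ := by
    simpa using integral_mono (integrable_const Lstar) (hint T) fun ω => hbdd (θ T ω)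
  rw [mul_sum]
  have htele := sum_range_le_of_le_sub_add (a := fun t => ∫ ω, f (θ t ω) ∂μ)
    (b := fun t => η / 2 * ∫ ω, ‖gradient f (θ t ω)‖ ^ 2 ∂μ) hstep T
  simp only [hθ0, integral_const, probReal_univ, one_smul] at htele
  linarith

end PreconditionedSGD

section Preconditioner

variable {E : Type*} [NormedAddCommGroup E] [InnerProductSpace ℝ E] {B : E →L[ℝ] E} {lam : ℝ}

theorem norm_one_add_smul_le {G : ℝ} (hlam : 0 ≤ lam) (hB : ‖B‖ ≤ G) :
    ‖1 + lam • B‖ ≤ 1 + lam * G := by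
  calc ‖1 + lam • B‖ ≤ ‖(1 : E →L[ℝ] E)‖ + lam * ‖B‖ := by
        simpa [norm_smul, abs_of_nonneg hlam] using norm_add_le (1 : E →L[ℝ] E) (lam • B)
    _ ≤ 1 + lam * G := by gcongr; exact ContinuousLinearMap.norm_id_le

theorem norm_sq_le_inner_one_add_smul_apply (hlam : 0 ≤ lam) (hB : ∀ v, 0 ≤ ⟪B v, v⟫) (v : E) :
    ‖v‖ ^ 2 ≤ ⟪(1 + lam • B) v, v⟫ := by
  rw [add_apply, inner_add_left, one_apply_eq_self,
    real_inner_self_eq_norm_sq, smul_apply, real_inner_smul_left]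
  nlinarith [hB v]

theorem inner_one_add_smul_apply_comm (hB : ∀ v w, ⟪B v, w⟫ = ⟪v, B w⟫) (v w : E) :
    ⟪(1 + lam • B) v, w⟫ = ⟪v, (1 + lam • B) w⟫ := by
  simp only [add_apply, one_apply_eq_self,
    smul_apply, inner_add_left, inner_add_right, real_inner_smul_left,
    real_inner_smul_right, hB]

end Preconditioner

/-- `O(1/√T)` rate for FIRE preconditioned SGD.
Under the same assumptions, for `T ≥ (1+λG)²` and step size `η = 1/((1+λG)·L·√T)`,
`min_{0 ≤ t < T} E[‖∇𝓛(θ^(t))‖²]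
  ≤ (2(1+λG)L(𝓛(θ^(0)) − 𝓛⋆) + (1+λG)σ²)/√T`. -/
theorem fire_min_gradient_rate
    {d : ℕ} {Ω : Type*} {m0 : MeasurableSpace Ω}
    (μ : Measure Ω) [IsProbabilityMeasure μ] (ℱ : Filtration ℕ m0)
    (𝓛 : EuclideanSpace ℝ (Fin d) → ℝ) (L Lstar : ℝ) (hL : 0 < L)
    (hdiff : Differentiable ℝ 𝓛)
    (hsmooth : ∀ a b, ‖gradient 𝓛 a - gradient 𝓛 b‖ ≤ L * ‖a - b‖)
    (hbdd : ∀ p, Lstar ≤ 𝓛 p)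
    (lam G σ : ℝ) (hlam : 0 ≤ lam) (hG : 0 ≤ G)
    (T : ℕ) (hT : ((1 + lam * G) ^ 2 : ℝ) ≤ (T : ℝ))
    (η : ℝ) (hη_def : η = 1 / ((1 + lam * G) * L * Real.sqrt T))
    (θ g : ℕ → Ω → EuclideanSpace ℝ (Fin d))
    (IG : ℕ → Ω → (EuclideanSpace ℝ (Fin d) →L[ℝ] EuclideanSpace ℝ (Fin d)))
    (θ0 : EuclideanSpace ℝ (Fin d)) (hθ0 : θ 0 = fun _ => θ0)
    (hupdate : ∀ t ω, θ (t + 1) ω = θ t ω - η • (g t ω + lam • (IG t ω) (g t ω)))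
    (hg_meas : ∀ t, StronglyMeasurable[ℱ (t + 1)] (g t))
    (hmean : ∀ t, μ[g t | ℱ t] =ᵐ[μ] fun ω => gradient 𝓛 (θ t ω))
    (hvar_int : ∀ t, Integrable (fun ω => ‖g t ω - gradient 𝓛 (θ t ω)‖ ^ 2) μ)
    (hvar : ∀ t, μ[fun ω => ‖g t ω - gradient 𝓛 (θ t ω)‖ ^ 2 | ℱ t]
      ≤ᵐ[μ] fun _ => σ ^ 2)
    (hIG_meas : ∀ t, StronglyMeasurable[ℱ t] (IG t))
    (hIG_symm : ∀ t ω v w, ⟪(IG t ω) v, w⟫ = ⟪v, (IG t ω) w⟫)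
    (hIG_psd : ∀ t ω v, 0 ≤ ⟪(IG t ω) v, v⟫)
    (hIG_norm : ∀ t ω, ‖IG t ω‖ ≤ G) :
    (Finset.range T).inf'
        (Finset.nonempty_range_iff.mpr (by
          rintro rfl
          norm_num at hT
          nlinarith [mul_nonneg hlam hG]))
        (fun t => ∫ ω, ‖gradient 𝓛 (θ t ω)‖ ^ 2 ∂μ)
      ≤ (2 * (1 + lam * G) * L * (𝓛 θ0 - Lstar) + (1 + lam * G) * σ ^ 2)
        / Real.sqrt T := by
  set K := 1 + lam * G
  have hK : 0 < K := by positivity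
  have hT0 : (0 : ℝ) < T := lt_of_lt_of_le (by positivity) hT
  have hKT : K ≤ Real.sqrt T := Real.le_sqrt_of_sq_le hT
  have hsqrt : 0 < Real.sqrt T := Real.sqrt_pos.2 hT0
  have hη : 0 < η := by rw [hη_def]; positivity
  have hηLK : η * L * K ^ 2 ≤ 1 := by
    rw [hη_def, div_mul_eq_mul_div, div_mul_eq_mul_div, div_le_one (by positivity)]
    nlinarith [mul_le_mul_of_nonneg_left hKT (by positivity : 0 ≤ K * L)]
  have hsum := preconditioned_sgd_sum_integral_norm_sq_le (A := fun t ω => 1 + lam • IG t ω)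
    hdiff hL.le hsmooth hbdd hθ0 (by simpa using hupdate) hg_meas hmean hvar_int hvar
    (fun t => stronglyMeasurable_const.add ((hIG_meas t).const_smul lam))
    (fun t ω => inner_one_add_smul_apply_comm (hIG_symm t ω))
    (fun t ω => norm_sq_le_inner_one_add_smul_apply hlam (hIG_psd t ω))
    (fun t ω => norm_one_add_smul_le hlam (hIG_norm t ω)) hη.le hηLK T
  refine (inf'_le_sum_div_card _ _).trans ?_
  rw [card_range, div_le_div_iff₀ hT0 hsqrt]
  rw [hη_def] at hsum
  field_simp at hsum
  rw [Real.sq_sqrt hT0.le] at hsum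
  exact le_of_mul_le_mul_left (by linear_combination hsum) hK
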